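/- arXiv:0805.1650 — 3 statements merged into one kernel-verified Lean document; each statement's English description precedes it below -/
import Mathlib

section
/- Assume ω is total, i.e. the linear span of {ω(A,B) : A,B ∈ H} equals 𝐂. Then there exists a constant K < ∞ such that d(e,(A,a)) ≤ K (‖A‖_H + sqrt(‖a‖_𝐂)) for all (A,a) ∈ 𝔤_CM. -/
open MeasureTheory

/-- The length of the `C¹` path `s ↦ (w s, c s)`, `0 ≤ s ≤ 1`, with respect to the
left invariant Riemannian metric on the Heisenberg type group determined by `ω`. -/
noncomputable def pathLen {H C : Type*} [NormedAddCommGroup H] [InnerProductSpace ℝ H]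
    [NormedAddCommGroup C] [InnerProductSpace ℝ C]
    (ω : H →L[ℝ] H →L[ℝ] C) (w : ℝ → H) (c : ℝ → C) : ℝ :=
  ∫ s in (0:ℝ)..1,
    Real.sqrt (‖deriv w s‖ ^ 2 + ‖deriv c s - (2:ℝ)⁻¹ • ω (w s) (deriv w s)‖ ^ 2)

/-- The left invariant Riemannian distance on `𝔤_CM = H × 𝐂`:  the infimum of the lengths of
`C¹` paths joining `x` to `y`. -/
noncomputable def dCM {H C : Type*} [NormedAddCommGroup H] [InnerProductSpace ℝ H]
    [NormedAddCommGroup C] [InnerProductSpace ℝ C]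
    (ω : H →L[ℝ] H →L[ℝ] C) (x y : H × C) : ℝ :=
  sInf {L : ℝ | ∃ w : ℝ → H, ∃ c : ℝ → C, ContDiff ℝ 1 w ∧ ContDiff ℝ 1 c ∧
    w 0 = x.1 ∧ c 0 = x.2 ∧ w 1 = y.1 ∧ c 1 = y.2 ∧ L = pathLen ω w c}

/-!
A path `(w, c)` is horizontal when `c' = ½ ω(w, w')`; its length is then `∫ ‖w'‖`, and its
endpoint is determined by `w`. Running through the segments `B₀, …, B_{m-1}` one after another
gives a horizontal path of length `∑ ‖Bₖ‖` from `e` to the product `(B₀,0)⋯(B_{m-1},0)`.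
The word `P, Q, -P, -Q` multiplies out to `(0, ω(P,Q))`, and rescaling `P` and `Q` produces
`t • ω(P,Q)` at the cost of a factor `√|t|` in length. By totality and finite dimensionality,
`𝐂` has a basis of values of `ω` whose coordinate functionals are bounded, so every `a ∈ 𝐂` is
a product of commutators of total length `O(√‖a‖)`; prepending the segment `A` reaches `(A, a)`.
-/

open Finset

noncomputable def ramp (m k : ℕ) (s : ℝ) : ℝ := Real.smoothTransition (m * s - k)

section ramp

variable {m j k : ℕ}

lemma contDiff_ramp (m k : ℕ) : ContDiff ℝ 1 (ramp m k) :=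
  Real.smoothTransition.contDiff.comp ((contDiff_const.mul contDiff_id).sub contDiff_const)

lemma continuous_deriv_ramp (m k : ℕ) : Continuous (deriv (ramp m k)) :=
  (contDiff_ramp m k).continuous_deriv le_rfl

lemma deriv_ramp_nonneg (m k : ℕ) (s : ℝ) : 0 ≤ deriv (ramp m k) s :=
  Monotone.deriv_nonneg fun _ _ h => Real.smoothTransition.monotone (by gcongr)

lemma ramp_zero (m k : ℕ) : ramp m k 0 = 0 :=
  Real.smoothTransition.zero_of_nonpos (by simp)

lemma ramp_one (hk : k < m) : ramp m k 1 = 1 := by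
  have : (k : ℝ) + 1 ≤ m := by exact_mod_cast hk
  exact Real.smoothTransition.one_of_one_le (by rw [mul_one]; linarith)

lemma integral_deriv_ramp (hk : k < m) : ∫ s in (0:ℝ)..1, deriv (ramp m k) s = 1 := by
  rw [intervalIntegral.integral_deriv_eq_sub
    (fun s _ => (contDiff_ramp m k).differentiable one_ne_zero s)
    ((continuous_deriv_ramp m k).intervalIntegrable _ _), ramp_one hk, ramp_zero, sub_zero]

lemma deriv_ramp_eq_zero {s : ℝ} (h : m * s - k < 0 ∨ 1 < m * s - k) :
    deriv (ramp m k) s = 0 := by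
  have hcont : Continuous fun x : ℝ => (m : ℝ) * x - k := by fun_prop
  suffices ∃ r : ℝ, ramp m k =ᶠ[nhds s] fun _ => r by
    obtain ⟨r, hr⟩ := this
    rw [hr.deriv_eq, deriv_const]
  rcases h with h | h
  · refine ⟨0, ?_⟩
    filter_upwards [(isOpen_lt hcont continuous_const).mem_nhds h] with x hx
      using Real.smoothTransition.zero_of_nonpos hx.le
  · refine ⟨1, ?_⟩
    filter_upwards [(isOpen_lt continuous_const hcont).mem_nhds h] with x hx
      using Real.smoothTransition.one_of_one_le hx.le

lemma ramp_mul_deriv_ramp_of_lt (hjk : j < k) (s : ℝ) :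
    ramp m j s * deriv (ramp m k) s = deriv (ramp m k) s := by
  rcases lt_or_ge ((m : ℝ) * s - k) 0 with h | h
  · rw [deriv_ramp_eq_zero (.inl h), mul_zero]
  · have : (j : ℝ) + 1 ≤ k := by exact_mod_cast hjk
    rw [ramp, Real.smoothTransition.one_of_one_le (by linarith), one_mul]

lemma ramp_mul_deriv_ramp_of_gt (hkj : k < j) (s : ℝ) :
    ramp m j s * deriv (ramp m k) s = 0 := by
  rcases le_or_gt ((m : ℝ) * s - k) 1 with h | h
  · have : (k : ℝ) + 1 ≤ j := by exact_mod_cast hkj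
    rw [ramp, Real.smoothTransition.zero_of_nonpos (by linarith), zero_mul]
  · rw [deriv_ramp_eq_zero (.inr h), mul_zero]

lemma integral_ramp_mul_deriv_ramp (hk : k < m) (hjk : j ≠ k) :
    ∫ s in (0:ℝ)..1, ramp m j s * deriv (ramp m k) s = if j < k then 1 else 0 := by
  rcases hjk.lt_or_gt with hjk | hkj
  · simp only [ramp_mul_deriv_ramp_of_lt hjk, integral_deriv_ramp hk, if_pos hjk]
  · simp [ramp_mul_deriv_ramp_of_gt hkj, hkj.not_gt]

end ramp

lemma sum_range_length_getD {α β : Type*} [AddCommMonoid β] (L : List α) (f : α → β) (d : α) :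
    ∑ k ∈ range L.length, f (L.getD k d) = (L.map f).sum := by
  induction L with
  | nil => simp
  | cons B L ih =>
    simp only [List.length_cons, sum_range_succ', List.getD_cons_succ, List.getD_cons_zero, ih,
      List.map_cons, List.sum_cons, add_comm]

lemma exists_fin_sum_smul_eq_of_span_eq_top {E : Type*} [NormedAddCommGroup E] [NormedSpace ℝ E]
    [FiniteDimensional ℝ E] {S : Set E} (hS : Submodule.span ℝ S = ⊤) :
    ∃ (n : ℕ) (e : Fin n → E) (M : ℝ), (∀ i, e i ∈ S) ∧ 0 ≤ M ∧
      ∀ a : E, ∃ t : Fin n → ℝ, ∑ i, t i • e i = a ∧ ∀ i, |t i| ≤ M * ‖a‖ := by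
  obtain ⟨s, hsS, hspan, hli⟩ := exists_linearIndependent ℝ S
  have : Fintype s := hli.setFinite.fintype
  let b := (Module.Basis.mk hli (by simp [hspan, hS])).reindex (Fintype.equivFin s)
  refine ⟨_, b, ‖b.equivFunL.toContinuousLinearMap‖, fun i => ?_, norm_nonneg _,
    fun a => ⟨b.equivFun a, b.sum_equivFun a, fun i => ?_⟩⟩
  · simpa [b] using hsS (Subtype.mem _)
  · exact (norm_le_pi_norm (b.equivFunL a) i).trans (b.equivFunL.toContinuousLinearMap.le_opNorm a)

section

variable {H C : Type*} [NormedAddCommGroup H] [NormedAddCommGroup C]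

def commutatorWord (l : List (H × H)) : List H := l.flatMap fun p => [p.1, p.2, -p.1, -p.2]

lemma sum_map_norm_commutatorWord (l : List (H × H)) :
    ((commutatorWord l).map norm).sum = 2 * (l.map fun p => ‖p.1‖ + ‖p.2‖).sum := by
  induction l with
  | nil => simp [commutatorWord]
  | cons p l ih =>
    rw [commutatorWord, List.flatMap_cons, List.map_append, List.sum_append, ← commutatorWord, ih]
    simp only [List.map_cons, List.map_nil, List.sum_cons, List.sum_nil, norm_neg]
    ring

section NormedSpace

variable [NormedSpace ℝ H] [NormedSpace ℝ C] (ω : H →L[ℝ] H →L[ℝ] C)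

-- Runs through `B 0, …, B (m-1)` in turn, the `k`-th one while `s ∈ [k/m, (k+1)/m]`.
noncomputable def staircase (m : ℕ) (B : ℕ → H) (s : ℝ) : H := ∑ k ∈ range m, ramp m k s • B k

variable (m : ℕ) (B : ℕ → H)

lemma contDiff_staircase : ContDiff ℝ 1 (staircase m B) :=
  ContDiff.sum fun k _ => (contDiff_ramp m k).smul contDiff_const

lemma deriv_staircase :
    deriv (staircase m B) = fun s => ∑ k ∈ range m, deriv (ramp m k) s • B k :=
  funext fun s => (HasDerivAt.fun_sum fun k _ =>
    ((contDiff_ramp m k).differentiable one_ne_zero s).hasDerivAt.smul_const (B k)).deriv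

lemma staircase_zero : staircase m B 0 = 0 :=
  sum_eq_zero fun k _ => by rw [ramp_zero, zero_smul]

lemma staircase_one : staircase m B 1 = ∑ k ∈ range m, B k :=
  sum_congr rfl fun _ hk => by rw [ramp_one (mem_range.1 hk), one_smul]

lemma integral_norm_deriv_staircase_le :
    ∫ s in (0:ℝ)..1, ‖deriv (staircase m B) s‖ ≤ ∑ k ∈ range m, ‖B k‖ := by
  have hcont : ∀ k, Continuous fun s => deriv (ramp m k) s * ‖B k‖ :=
    fun k => (continuous_deriv_ramp m k).mul_const _
  calc ∫ s in (0:ℝ)..1, ‖deriv (staircase m B) s‖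
      ≤ ∫ s in (0:ℝ)..1, ∑ k ∈ range m, deriv (ramp m k) s * ‖B k‖ := by
        refine intervalIntegral.integral_mono_on zero_le_one ?_
          ((continuous_finsetSum _ fun k _ => hcont k).intervalIntegrable _ _) fun s _ => ?_
        · exact ((contDiff_staircase m B).continuous_deriv le_rfl).norm.intervalIntegrable _ _
        · rw [deriv_staircase]
          refine (norm_sum_le _ _).trans_eq (sum_congr rfl fun k _ => ?_)
          rw [norm_smul, Real.norm_of_nonneg (deriv_ramp_nonneg m k s)]
    _ = ∑ k ∈ range m, ‖B k‖ := by
        rw [intervalIntegral.integral_finsetSum fun k _ => (hcont k).intervalIntegrable _ _]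
        refine sum_congr rfl fun k hk => ?_
        rw [intervalIntegral.integral_mul_const, integral_deriv_ramp (mem_range.1 hk), one_mul]

lemma apply_staircase_deriv (s : ℝ) :
    ω (staircase m B s) (deriv (staircase m B) s)
      = ∑ j ∈ range m, ∑ k ∈ range m, (ramp m j s * deriv (ramp m k) s) • ω (B j) (B k) := by
  simp only [staircase, deriv_staircase, map_sum, map_smul, _root_.sum_apply, smul_apply,
    smul_sum, smul_smul]
  rw [sum_comm]
  simp only [mul_comm (deriv _ _)]

lemma integral_ramp_mul_deriv_ramp_smul (hω : ∀ A, ω A A = 0) {j k : ℕ} (hk : k < m) :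
    (∫ s in (0:ℝ)..1, ramp m j s * deriv (ramp m k) s) • ω (B j) (B k)
      = if j < k then ω (B j) (B k) else 0 := by
  rcases eq_or_ne j k with rfl | hjk
  · simp [hω]
  · rw [integral_ramp_mul_deriv_ramp hk hjk]
    split_ifs <;> simp

lemma integral_apply_staircase_deriv [CompleteSpace C] (hω : ∀ A, ω A A = 0) :
    ∫ s in (0:ℝ)..1, ω (staircase m B s) (deriv (staircase m B) s)
      = ∑ k ∈ range m, ∑ j ∈ range k, ω (B j) (B k) := by
  have hcont : ∀ j k : ℕ,
      Continuous fun s => (ramp m j s * deriv (ramp m k) s) • ω (B j) (B k) :=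
    fun j k => ((contDiff_ramp m j).continuous.mul (continuous_deriv_ramp m k)).smul
      continuous_const
  have hrow : ∀ j, ∫ s in (0:ℝ)..1,
      ∑ k ∈ range m, (ramp m j s * deriv (ramp m k) s) • ω (B j) (B k)
      = ∑ k ∈ range m, (∫ s in (0:ℝ)..1, ramp m j s * deriv (ramp m k) s) • ω (B j) (B k) := by
    intro j
    rw [intervalIntegral.integral_finsetSum fun k _ => (hcont j k).intervalIntegrable _ _]
    simp only [intervalIntegral.integral_smul_const]
  simp only [apply_staircase_deriv]
  rw [intervalIntegral.integral_finsetSum fun j _ =>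
      (continuous_finsetSum _ fun k _ => hcont j k).intervalIntegrable _ _,
    sum_congr rfl fun j _ => hrow j, sum_comm]
  refine sum_congr rfl fun k hk => ?_
  have hkm := mem_range.1 hk
  rw [sum_congr rfl fun j _ => integral_ramp_mul_deriv_ramp_smul ω m B hω hkm, ← sum_filter]
  congr 1
  ext j
  simp only [mem_filter, mem_range]
  omega

lemma apply_self_eq_zero_of_skew (hskew : ∀ A B : H, ω A B = - ω B A) (A : H) :
    ω A A = 0 := by
  have h := hskew A A
  rw [eq_neg_iff_add_eq_zero, ← two_smul ℝ] at h
  exact (smul_eq_zero.1 h).resolve_left two_ne_zero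

noncomputable def heisMul (x y : H × C) : H × C := (x.1 + y.1, x.2 + y.2 + (2:ℝ)⁻¹ • ω x.1 y.1)

noncomputable def wordProd (L : List H) : H × C := L.foldr (fun B x => heisMul ω (B, 0) x) (0, 0)

@[simp]
lemma wordProd_nil : wordProd ω [] = (0, 0) := rfl

@[simp]
lemma wordProd_cons (B : H) (L : List H) :
    wordProd ω (B :: L) = heisMul ω (B, 0) (wordProd ω L) := rfl

lemma heisMul_assoc (x y z : H × C) :
    heisMul ω (heisMul ω x y) z = heisMul ω x (heisMul ω y z) := by
  simp only [heisMul, map_add, add_apply, smul_add, Prod.mk.injEq]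
  constructor <;> abel

lemma wordProd_append (L₁ L₂ : List H) :
    wordProd ω (L₁ ++ L₂) = heisMul ω (wordProd ω L₁) (wordProd ω L₂) := by
  induction L₁ with
  | nil => simp [heisMul]
  | cons B L ih => rw [List.cons_append, wordProd_cons, wordProd_cons, ih, heisMul_assoc]

lemma wordProd_eq_sum (L : List H) : wordProd ω L =
    (∑ k ∈ range L.length, L.getD k 0,
      (2:ℝ)⁻¹ • ∑ k ∈ range L.length, ∑ j ∈ range k, ω (L.getD j 0) (L.getD k 0)) := by
  induction L with
  | nil => simp
  | cons B L ih =>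
    simp only [wordProd_cons, ih, heisMul, List.length_cons, sum_range_succ', sum_range_zero,
      List.getD_cons_succ, List.getD_cons_zero, map_sum, sum_add_distrib, smul_add, zero_add,
      add_zero, add_comm B]

lemma wordProd_commutatorWord (hskew : ∀ A B : H, ω A B = - ω B A) (l : List (H × H)) :
    wordProd ω (commutatorWord l) = (0, (l.map fun p => ω p.1 p.2).sum) := by
  induction l with
  | nil => rfl
  | cons p l ih =>
    rw [commutatorWord, List.flatMap_cons, wordProd_append, ← commutatorWord, ih]
    simp only [wordProd_cons, wordProd_nil, heisMul, map_neg, map_add, map_zero, neg_apply,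
      apply_self_eq_zero_of_skew ω hskew, hskew p.2 p.1, List.map_cons,
      List.sum_cons, Prod.mk.injEq]
    constructor
    · abel
    · module

lemma exists_apply_eq_smul_apply (t : ℝ) (P Q : H) :
    ∃ P' Q' : H, ω P' Q' = t • ω P Q ∧ ‖P'‖ + ‖Q'‖ = √|t| * (‖P‖ + ‖Q‖) := by
  refine ⟨√|t| • P, (t / √|t|) • Q, ?_, ?_⟩
  · rcases eq_or_ne t 0 with rfl | ht
    · simp
    · have : √|t| ≠ 0 := (Real.sqrt_pos.2 (abs_pos.2 ht)).ne'
      rw [map_smul, map_smul, smul_apply, smul_smul, div_mul_cancel₀ _ this]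
  · rw [norm_smul, norm_smul, Real.norm_eq_abs, Real.norm_eq_abs, abs_div,
      abs_of_nonneg (Real.sqrt_nonneg _), Real.div_sqrt, mul_add]

lemma exists_sum_apply_eq_of_span_eq_top [FiniteDimensional ℝ C]
    (htotal : Submodule.span ℝ {c : C | ∃ A B : H, ω A B = c} = ⊤) :
    ∃ K : ℝ, 0 ≤ K ∧ ∀ a : C, ∃ l : List (H × H),
      (l.map fun p => ω p.1 p.2).sum = a ∧ (l.map fun p => ‖p.1‖ + ‖p.2‖).sum ≤ K * √‖a‖ := by
  obtain ⟨n, e, M, he, hM, hrepr⟩ := exists_fin_sum_smul_eq_of_span_eq_top htotal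
  choose P Q hPQ using he
  refine ⟨√M * ∑ i, (‖P i‖ + ‖Q i‖),
    mul_nonneg (Real.sqrt_nonneg M) (sum_nonneg fun i _ => by positivity), fun a => ?_⟩
  obtain ⟨t, ht_sum, ht_le⟩ := hrepr a
  choose P' Q' hPQ' hnorm using fun i => exists_apply_eq_smul_apply ω (t i) (P i) (Q i)
  refine ⟨List.ofFn fun i => (P' i, Q' i), ?_, ?_⟩
  · simp only [List.map_ofFn, List.sum_ofFn, Function.comp_apply, hPQ', hPQ, ht_sum]
  · simp only [List.map_ofFn, List.sum_ofFn, Function.comp_apply, hnorm, mul_sum, sum_mul]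
    refine sum_le_sum fun i _ => ?_
    rw [mul_right_comm, ← Real.sqrt_mul hM]
    exact mul_le_mul_of_nonneg_right (Real.sqrt_le_sqrt (ht_le i)) (by positivity)

end NormedSpace

section InnerProductSpace

variable [InnerProductSpace ℝ H] [InnerProductSpace ℝ C] (ω : H →L[ℝ] H →L[ℝ] C)

lemma pathLen_nonneg (w : ℝ → H) (c : ℝ → C) : 0 ≤ pathLen ω w c :=
  intervalIntegral.integral_nonneg zero_le_one fun _ _ => Real.sqrt_nonneg _

lemma dCM_le_pathLen {w : ℝ → H} {c : ℝ → C} (hw : ContDiff ℝ 1 w) (hc : ContDiff ℝ 1 c) :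
    dCM ω (w 0, c 0) (w 1, c 1) ≤ pathLen ω w c :=
  csInf_le ⟨0, by rintro _ ⟨w, c, -, -, -, -, -, -, rfl⟩; exact pathLen_nonneg ω w c⟩
    ⟨w, c, hw, hc, rfl, rfl, rfl, rfl, rfl⟩

lemma dCM_le_integral_norm_deriv [CompleteSpace C] {w : ℝ → H} (hw : ContDiff ℝ 1 w) (a : C) :
    dCM ω (w 0, a) (w 1, a + (2:ℝ)⁻¹ • ∫ s in (0:ℝ)..1, ω (w s) (deriv w s))
      ≤ ∫ s in (0:ℝ)..1, ‖deriv w s‖ := by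
  set g : ℝ → C := fun s => ω (w s) (deriv w s)
  have hg : Continuous g :=
    (ω.continuous.comp hw.continuous).clm_apply (hw.continuous_deriv le_rfl)
  set c : ℝ → C := fun s => a + (2:ℝ)⁻¹ • ∫ u in (0:ℝ)..s, g u
  have hc : ∀ s, HasDerivAt c ((2:ℝ)⁻¹ • g s) s := fun s =>
    ((hg.integral_hasStrictDerivAt 0 s).hasDerivAt.const_smul _).const_add a
  have hdc : deriv c = fun s => (2:ℝ)⁻¹ • g s := funext fun s => (hc s).deriv
  have hc1 : ContDiff ℝ 1 c :=
    contDiff_one_iff_deriv.2 ⟨fun s => (hc s).differentiableAt, hdc ▸ hg.const_smul _⟩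
  have key := dCM_le_pathLen ω hw hc1
  have hc0 : c 0 = a := by simp [c]
  rw [hc0] at key
  refine key.trans_eq (intervalIntegral.integral_congr fun s _ => ?_)
  simp [hdc, g]

lemma dCM_zero_wordProd_le [CompleteSpace C] (hω : ∀ A, ω A A = 0) (L : List H) :
    dCM ω (0, 0) (wordProd ω L) ≤ (L.map norm).sum := by
  have key := dCM_le_integral_norm_deriv ω (contDiff_staircase L.length (L.getD · 0)) 0
  rw [staircase_zero, staircase_one, integral_apply_staircase_deriv ω _ _ hω, zero_add,
    ← wordProd_eq_sum] at key
  exact key.trans ((integral_norm_deriv_staircase_le _ _).trans_eq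
    (sum_range_length_getD L norm 0))

end InnerProductSpace

end

theorem dist_le_of_total_general
    {H C : Type*} [NormedAddCommGroup H] [InnerProductSpace ℝ H]
    [NormedAddCommGroup C] [InnerProductSpace ℝ C] [FiniteDimensional ℝ C]
    (ω : H →L[ℝ] H →L[ℝ] C)
    (hskew : ∀ A B : H, ω A B = - ω B A)
    (htotal : Submodule.span ℝ {c : C | ∃ A B : H, ω A B = c} = ⊤) :
    ∃ K : ℝ, ∀ (A : H) (a : C),
      dCM ω ((0 : H), (0 : C)) (A, a) ≤ K * (‖A‖ + Real.sqrt ‖a‖) := by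
  obtain ⟨K, hK, hcomm⟩ := exists_sum_apply_eq_of_span_eq_top ω htotal
  refine ⟨1 + 2 * K, fun A a => ?_⟩
  obtain ⟨l, hl_sum, hl_norm⟩ := hcomm a
  have hword : wordProd ω (A :: commutatorWord l) = (A, a) := by
    simp [wordProd_commutatorWord ω hskew, hl_sum, heisMul]
  calc dCM ω (0, 0) (A, a) = dCM ω (0, 0) (wordProd ω (A :: commutatorWord l)) := by rw [hword]
    _ ≤ ((A :: commutatorWord l).map norm).sum :=
        dCM_zero_wordProd_le ω (apply_self_eq_zero_of_skew ω hskew) _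
    _ = ‖A‖ + 2 * (l.map fun p => ‖p.1‖ + ‖p.2‖).sum := by
        rw [List.map_cons, List.sum_cons, sum_map_norm_commutatorWord]
    _ ≤ ‖A‖ + 2 * (K * √‖a‖) := by gcongr
    _ ≤ (1 + 2 * K) * (‖A‖ + √‖a‖) := by nlinarith [norm_nonneg A, Real.sqrt_nonneg ‖a‖]

/-- If `ω` is total (the span of its range is all of `𝐂`), then there is a constant `K < ∞`
with `d(e,(A,a)) ≤ K (‖A‖_H + √‖a‖_𝐂)` for all `(A,a) ∈ 𝔤_CM`. -/
theorem dist_le_of_total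
    {H C : Type*} [NormedAddCommGroup H] [InnerProductSpace ℝ H]
    [TopologicalSpace.SeparableSpace H]
    [NormedAddCommGroup C] [InnerProductSpace ℝ C] [FiniteDimensional ℝ C]
    (ω : H →L[ℝ] H →L[ℝ] C)
    (hskew : ∀ A B : H, ω A B = - ω B A)
    (htotal : Submodule.span ℝ {c : C | ∃ A B : H, ω A B = c} = ⊤) :
    ∃ K : ℝ, ∀ (A : H) (a : C),
      dCM ω ((0 : H), (0 : C)) (A, a) ≤ K * (‖A‖ + Real.sqrt ‖a‖) :=
  dist_le_of_total_general ω hskew htotal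
end

section
/- Let K denote the closure of X* (viewed as a subspace of functions on X) in L²(X,μ;ℝ). For every f ∈ K the Bochner integral ιf := ∫_X x f(x) dμ(x) exists in X, the element ιf belongs to H with ‖ιf‖_H = ‖f‖_{L²(μ)}, and the map ι : K → H is a bijection onto H; consequently ‖·‖_H is a Hilbertian norm and (H, ‖·‖_H) is a separable Hilbert space. -/
/-!
Let `T : X* → L²(μ)` send `u` to itself. By the characteristic function each `u` has law
`N(0, q(u,u))` under `μ`, so `‖T u‖ = √q(u,u)`, and `u (ι f) = ⟪T u, f⟫` for `f ∈ L²(μ)`.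
Hence `‖ι f‖_H = sup_u |⟪T u, f⟫| / ‖T u‖`, which is `‖f‖` as soon as `f` lies in the closure
`K` of the range of `T`. Conversely, for `x ∈ H` the functional `T u ↦ u x` is bounded on the
range of `T`, so by Riesz it is `⟪·, f⟫` for some `f ∈ K`, and then `ι f = x`. Thus `ι` is a
linear isometry of `K` onto `H`, and `H` inherits the Hilbert space structure of `K`.
-/

open MeasureTheory ProbabilityTheory Filter Topology
open scoped NNReal ENNReal RealInnerProductSpace

/-- The set `{|u(x)| / √q(u,u) : u ∈ X*, u ≠ 0}` whose supremum is the Cameron–Martin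
norm `‖x‖_H`;  `x ∈ H` iff this set is bounded above, and then `‖x‖_H = sSup (cmSet q x)`. -/
def cmSet {X : Type*} [NormedAddCommGroup X] [NormedSpace ℝ X]
    (q : (X →L[ℝ] ℝ) → (X →L[ℝ] ℝ) → ℝ) (x : X) : Set ℝ :=
  {r : ℝ | ∃ u : X →L[ℝ] ℝ, u ≠ 0 ∧ r = |u x| / Real.sqrt (q u u)}

/-- The Cameron–Martin norm `‖x‖_H` (for `x ∈ H`, i.e. when `cmSet q x` is bounded above). -/
noncomputable def cmNorm {X : Type*} [NormedAddCommGroup X] [NormedSpace ℝ X]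
    (q : (X →L[ℝ] ℝ) → (X →L[ℝ] ℝ) → ℝ) (x : X) : ℝ :=
  sSup (cmSet q x)

section Gaussian

variable {Ω : Type*} [MeasurableSpace Ω] {μ : Measure Ω} {u : Ω → ℝ} {v : ℝ≥0}

lemma map_eq_gaussianReal_of_charFun [IsFiniteMeasure μ] (hu : AEMeasurable u μ)
    (h : ∀ t : ℝ, ∫ x, Complex.exp (Complex.I * ((t * u x : ℝ) : ℂ)) ∂μ =
      Complex.exp (-((t ^ 2 * v : ℝ) : ℂ) / 2)) :
    μ.map u = gaussianReal 0 v := by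
  refine Measure.ext_of_charFun (funext fun t => ?_)
  rw [charFun_apply_real, integral_map hu (by fun_prop), charFun_gaussianReal]
  convert h t using 3
  · simp [mul_comm]
  · push_cast; ring_nf

lemma integral_sq_eq_of_map_eq_gaussianReal (hu : AEMeasurable u μ)
    (h : μ.map u = gaussianReal 0 v) : ∫ x, u x ^ 2 ∂μ = v := by
  have hmap := integral_map (f := fun y : ℝ => y ^ 2) hu (by fun_prop)
  rw [← variance_id_gaussianReal (μ := 0), ← h,
    variance_of_integral_eq_zero measurable_id.aemeasurable]
  · simpa using hmap.symm
  · rw [h]; exact integral_id_gaussianReal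

end Gaussian

section BilinearForm

variable {V : Type*} [AddCommGroup V] [Module ℝ V] {q : V → V → ℝ}

lemma apply_smul_smul_eq_sq_mul (hq_symm : ∀ u v, q u v = q v u)
    (hq_smul : ∀ (r : ℝ) u v, q (r • u) v = r * q u v) (t : ℝ) (u : V) :
    q (t • u) (t • u) = t ^ 2 * q u u := by
  rw [hq_smul, hq_symm, hq_smul, hq_symm]; ring

lemma apply_self_nonneg_of_pos (hq_smul : ∀ (r : ℝ) u v, q (r • u) v = r * q u v)
    (hq_pos : ∀ u ≠ 0, 0 < q u u) (u : V) : 0 ≤ q u u := by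
  rcases eq_or_ne u 0 with rfl | hu
  · simpa using (hq_smul 0 0 0).ge
  · exact (hq_pos u hu).le

end BilinearForm

lemma exists_mem_topologicalClosure_inner_eq {E : Type*} [NormedAddCommGroup E]
    [InnerProductSpace ℝ E] [CompleteSpace E] (W : Submodule ℝ E) (φ : StrongDual ℝ W) :
    ∃ f ∈ W.topologicalClosure, ∀ w : W, ⟪(w : E), f⟫ = φ w := by
  obtain ⟨g, hg, -⟩ := exists_extension_norm_eq W φ
  set f₀ := (InnerProductSpace.toDual ℝ E).symm g
  refine ⟨W.topologicalClosure.starProjection f₀, Submodule.starProjection_apply_mem _ _,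
    fun w => ?_⟩
  have hw : (w : E) ∈ W.topologicalClosure := W.le_topologicalClosure w.2
  rw [← Submodule.inner_starProjection_left_eq_right,
    Submodule.starProjection_eq_self_iff.mpr hw, real_inner_comm,
    InnerProductSpace.toDual_symm_apply, hg]

section CameronMartin

variable {X E : Type*} [NormedAddCommGroup X] [NormedSpace ℝ X]
  [NormedAddCommGroup E] [InnerProductSpace ℝ E]
  {q : StrongDual ℝ X → StrongDual ℝ X → ℝ} {T : StrongDual ℝ X →ₗ[ℝ] E} {ι : E →ₗ[ℝ] X}

lemma le_norm_of_mem_cmSet (hT : ∀ u, ‖T u‖ = √(q u u)) (hι : ∀ u f, u (ι f) = ⟪T u, f⟫)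
    {f : E} {r : ℝ} (hr : r ∈ cmSet q (ι f)) : r ≤ ‖f‖ := by
  obtain ⟨u, -, rfl⟩ := hr
  rw [hι, ← hT]
  exact div_le_of_le_mul₀ (norm_nonneg _) (norm_nonneg _)
    ((abs_real_inner_le_norm _ _).trans_eq (mul_comm _ _))

lemma cmNorm_eq_norm_of_mem_topologicalClosure (hT : ∀ u, ‖T u‖ = √(q u u))
    (hι : ∀ u f, u (ι f) = ⟪T u, f⟫) {f : E} (hf : f ∈ (LinearMap.range T).topologicalClosure) :
    cmNorm q (ι f) = ‖f‖ := by
  have hle : cmNorm q (ι f) ≤ ‖f‖ :=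
    Real.sSup_le (fun r hr => le_norm_of_mem_cmSet hT hι hr) (norm_nonneg f)
  refine hle.antisymm ?_
  rcases eq_or_ne f 0 with rfl | hf0
  · rw [norm_zero]
    exact Real.sSup_nonneg fun r ⟨u, _, hr⟩ => hr ▸ by positivity
  rw [← SetLike.mem_coe, Submodule.topologicalClosure_coe, LinearMap.coe_range,
    mem_closure_iff_seq_limit] at hf
  obtain ⟨w, hwT, hwf⟩ := hf
  choose u hu using hwT
  have hlim : Tendsto (fun n => |⟪w n, f⟫| / ‖w n‖) atTop (𝓝 ‖f‖) := by
    have := (hwf.inner (tendsto_const_nhds (x := f))).abs.div hwf.norm (norm_ne_zero_iff.mpr hf0)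
    rwa [real_inner_self_eq_norm_sq, abs_of_nonneg (sq_nonneg _), sq,
      mul_div_cancel_right₀ _ (norm_ne_zero_iff.mpr hf0)] at this
  refine le_of_tendsto hlim ?_
  filter_upwards [hwf.eventually_ne hf0] with n hn
  refine le_csSup ⟨‖f‖, fun r hr => le_norm_of_mem_cmSet hT hι hr⟩ ⟨u n, ?_, ?_⟩
  · intro hu0
    exact hn (by rw [← hu n, hu0, map_zero])
  · rw [hι, ← hT, hu]

lemma injective_of_norm_eq_sqrt (hT : ∀ u, ‖T u‖ = √(q u u)) (hq_pos : ∀ u ≠ 0, 0 < q u u) :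
    Function.Injective T :=
  (injective_iff_map_eq_zero T).mpr fun u hu => by
    by_contra hu0
    have := Real.sqrt_pos.mpr (hq_pos u hu0)
    rw [← hT, hu, norm_zero] at this
    exact this.false

lemma exists_eq_of_bddAbove_cmSet [CompleteSpace E] (hT : ∀ u, ‖T u‖ = √(q u u))
    (hq_pos : ∀ u ≠ 0, 0 < q u u) (hι : ∀ u f, u (ι f) = ⟪T u, f⟫) {x : X}
    (hx : BddAbove (cmSet q x)) : ∃ f ∈ (LinearMap.range T).topologicalClosure, ι f = x := by
  have hT_inj := injective_of_norm_eq_sqrt hT hq_pos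
  obtain ⟨M, hM⟩ := hx
  have hbound : ∀ u, |u x| ≤ M * ‖T u‖ := by
    intro u
    rcases eq_or_ne u 0 with rfl | hu
    · simp
    have hTu : 0 < ‖T u‖ := norm_pos_iff.mpr ((map_ne_zero_iff T hT_inj).mpr hu)
    rw [← div_le_iff₀ hTu, hT]
    exact hM ⟨u, hu, rfl⟩
  let e := LinearEquiv.ofInjective T hT_inj
  let φ : StrongDual ℝ (LinearMap.range T) :=
    ((ContinuousLinearMap.apply ℝ ℝ x).toLinearMap ∘ₗ e.symm.toLinearMap).mkContinuous M
      fun w => by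
        obtain ⟨u, rfl⟩ := e.surjective w
        simpa [e] using hbound u
  obtain ⟨f, hfK, hf⟩ := exists_mem_topologicalClosure_inner_eq _ φ
  refine ⟨f, hfK, (SeparatingDual.eq_iff_forall_dual_eq (R := ℝ)).mpr fun u => ?_⟩
  rw [hι, ← LinearEquiv.ofInjective_apply (h := hT_inj), hf]
  simp [φ, e]

end CameronMartin

section Transport

variable {E X : Type*} [NormedAddCommGroup E] [NormedSpace ℝ E] [AddCommGroup X] [Module ℝ X]
  {K : Submodule ℝ E} {ι : E →ₗ[ℝ] X} {N : X → ℝ}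

lemma injOn_of_norm_eq (hN : ∀ f ∈ K, N (ι f) = ‖f‖) : Set.InjOn ι K := by
  intro f hf g hg hfg
  rw [← sub_eq_zero, ← norm_eq_zero, ← hN _ (K.sub_mem hf hg), map_sub, hfg, sub_self,
    ← ι.map_zero, hN 0 K.zero_mem, norm_zero]

lemma exists_countable_dense_of_norm_eq [TopologicalSpace.SeparableSpace K]
    (hN : ∀ f ∈ K, N (ι f) = ‖f‖) :
    ∃ D : Set X, D.Countable ∧ D ⊆ K.map ι ∧
      ∀ x ∈ K.map ι, ∀ ε > 0, ∃ y ∈ D, N (x - y) < ε := by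
  obtain ⟨D, hDc, hDd⟩ := TopologicalSpace.exists_countable_dense K
  refine ⟨(fun g : K => ι g) '' D, hDc.image _, ?_, ?_⟩
  · rintro _ ⟨g, -, rfl⟩
    exact ⟨g, g.2, rfl⟩
  · rintro _ ⟨f, hf, rfl⟩ ε hε
    obtain ⟨g, hgD, hfg⟩ := Metric.mem_closure_iff.mp (hDd (⟨f, hf⟩ : K)) ε hε
    refine ⟨ι g, ⟨g, hgD, rfl⟩, ?_⟩
    rwa [← map_sub, hN _ (K.sub_mem hf g.2), ← dist_eq_norm]

lemma exists_tendsto_of_norm_eq [CompleteSpace K]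
    (hN : ∀ f ∈ K, N (ι f) = ‖f‖) {s : ℕ → X} (hs : ∀ n, s n ∈ K.map ι)
    (hcauchy : ∀ ε > 0, ∃ N₀ : ℕ, ∀ m ≥ N₀, ∀ n ≥ N₀, N (s m - s n) < ε) :
    ∃ x ∈ K.map ι, Tendsto (fun n => N (s n - x)) atTop (𝓝 0) := by
  choose f hfK hfs using hs
  let g : ℕ → K := fun n => ⟨f n, hfK n⟩
  have hdist : ∀ m n, dist (g m) (g n) = N (s m - s n) := fun m n => by
    rw [← hfs, ← hfs, ← map_sub, hN _ (K.sub_mem (hfK m) (hfK n)), dist_eq_norm]; rfl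
  obtain ⟨h, hh⟩ := cauchySeq_tendsto_of_complete
    (Metric.cauchySeq_iff.mpr fun ε hε => (hcauchy ε hε).imp fun N₀ hN₀ m hm n hn =>
      (hdist m n).trans_lt (hN₀ m hm n hn))
  refine ⟨ι h, ⟨h, h.2, rfl⟩, ?_⟩
  refine (tendsto_iff_dist_tendsto_zero.mp hh).congr fun n => ?_
  rw [← hfs, ← map_sub, hN _ (K.sub_mem (hfK n) h.2), dist_eq_norm]; rfl

end Transport

lemma parallelogram_of_norm_eq {E X : Type*} [NormedAddCommGroup E] [InnerProductSpace ℝ E]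
    [AddCommGroup X] [Module ℝ X] {K : Submodule ℝ E} {ι : E →ₗ[ℝ] X} {N : X → ℝ}
    (hN : ∀ f ∈ K, N (ι f) = ‖f‖) {x y : X} (hx : x ∈ K.map ι) (hy : y ∈ K.map ι) :
    N (x + y) ^ 2 + N (x - y) ^ 2 = 2 * N x ^ 2 + 2 * N y ^ 2 := by
  obtain ⟨f, hf, rfl⟩ := hx
  obtain ⟨g, hg, rfl⟩ := hy
  rw [← map_add, ← map_sub, hN _ (K.add_mem hf hg), hN _ (K.sub_mem hf hg), hN f hf, hN g hg]
  have := parallelogram_law_with_norm ℝ f g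
  nlinarith [this]

section L2

variable {X : Type*} [NormedAddCommGroup X] [NormedSpace ℝ X] [MeasurableSpace X] {μ : Measure X}

lemma Lp.integrable_smul_id (hX : MemLp (id : X → X) 2 μ) (f : Lp ℝ 2 μ) :
    Integrable (fun x => f x • x) μ :=
  memLp_one_iff_integrable.1 (hX.smul (Lp.memLp f))

noncomputable def Lp.integralSmulIdₗ (hX : MemLp (id : X → X) 2 μ) : Lp ℝ 2 μ →ₗ[ℝ] X where
  toFun f := ∫ x, f x • x ∂μ
  map_add' f g := by
    rw [← integral_add (Lp.integrable_smul_id hX f) (Lp.integrable_smul_id hX g)]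
    refine integral_congr_ae ?_
    filter_upwards [Lp.coeFn_add f g] with x hx
    rw [hx, Pi.add_apply, add_smul]
  map_smul' c f := by
    rw [RingHom.id_apply, ← integral_smul]
    refine integral_congr_ae ?_
    filter_upwards [Lp.coeFn_smul c f] with x hx
    rw [hx, Pi.smul_apply, smul_eq_mul, mul_smul]

lemma Lp.integralSmulIdₗ_apply (hX : MemLp (id : X → X) 2 μ) (f : Lp ℝ 2 μ) :
    Lp.integralSmulIdₗ hX f = ∫ x, f x • x ∂μ := rfl

lemma StrongDual.apply_integralSmulIdₗ [OpensMeasurableSpace X] [CompleteSpace X]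
    (hX : MemLp (id : X → X) 2 μ) (u : StrongDual ℝ X) (f : Lp ℝ 2 μ) :
    u (Lp.integralSmulIdₗ hX f) = ⟪StrongDual.toLp μ 2 u, f⟫ := by
  rw [Lp.integralSmulIdₗ_apply, ← u.integral_comp_comm (Lp.integrable_smul_id hX f),
    L2.inner_def]
  refine integral_congr_ae ?_
  have hu : MemLp u 2 μ := hX.continuousLinearMap_comp u
  filter_upwards [hu.coeFn_toLp] with x hx
  rw [StrongDual.toLp_apply hX, hx]
  simp

lemma StrongDual.norm_toLp_sq [OpensMeasurableSpace X] (hX : MemLp (id : X → X) 2 μ)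
    (u : StrongDual ℝ X) :
    ‖StrongDual.toLp μ 2 u‖ ^ 2 = ∫ x, u x ^ 2 ∂μ := by
  rw [← real_inner_self_eq_norm_sq]
  have := uncenteredCovarianceBilinDual_apply hX u u
  simpa [uncenteredCovarianceBilinDual, sq] using this

lemma StrongDual.norm_toLp_eq_sqrt_of_charFun [OpensMeasurableSpace X] [IsFiniteMeasure μ]
    (hX : MemLp (id : X → X) 2 μ) {u : StrongDual ℝ X} {v : ℝ} (hv : 0 ≤ v)
    (h : ∀ t : ℝ, ∫ x, Complex.exp (Complex.I * ((t * u x : ℝ) : ℂ)) ∂μ =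
      Complex.exp (-((t ^ 2 * v : ℝ) : ℂ) / 2)) :
    ‖StrongDual.toLp μ 2 u‖ = √v := by
  have hmap : μ.map u = gaussianReal 0 v.toNNReal :=
    map_eq_gaussianReal_of_charFun u.continuous.aemeasurable (by simpa [hv] using h)
  rw [← Real.sqrt_sq (norm_nonneg _), StrongDual.norm_toLp_sq hX,
    integral_sq_eq_of_map_eq_gaussianReal u.continuous.aemeasurable hmap, Real.coe_toNNReal _ hv]

end L2

theorem cameronMartin_isometry_of_L2_general
    {X : Type*} [NormedAddCommGroup X] [NormedSpace ℝ X] [CompleteSpace X]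
    [TopologicalSpace.SeparableSpace X] [MeasurableSpace X] [BorelSpace X]
    (μ : Measure X) [IsProbabilityMeasure μ]
    (q : (X →L[ℝ] ℝ) → (X →L[ℝ] ℝ) → ℝ)
    (hq_symm : ∀ u v : X →L[ℝ] ℝ, q u v = q v u)
    (hq_smul : ∀ (r : ℝ) (u v : X →L[ℝ] ℝ), q (r • u) v = r * q u v)
    (hq_pos : ∀ u : X →L[ℝ] ℝ, u ≠ 0 → 0 < q u u)
    (hchar : ∀ u : X →L[ℝ] ℝ,
      (∫ x, Complex.exp (Complex.I * (u x : ℂ)) ∂μ) = Complex.exp (-(q u u : ℂ) / 2))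
    (hC2 : Integrable (fun x => ‖x‖ ^ 2) μ)
    (hu2 : ∀ u : X →L[ℝ] ℝ, MemLp (fun x => u x) 2 μ) :
    -- `K` is the closure of `X*` in `L²(μ)` and `ι f = ∫ x f(x) dμ(x)`:
    ∀ K : Set (Lp ℝ 2 μ),
      K = closure (Set.range fun u : X →L[ℝ] ℝ => (hu2 u).toLp (fun x => u x)) →
      ∀ ι : Lp ℝ 2 μ → X, (ι = fun f => ∫ x, f x • x ∂μ) →
      -- the Bochner integral defining `ι f` exists and `ι f ∈ H` isometrically:
      (∀ f ∈ K, Integrable (fun x => f x • x) μ ∧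
        BddAbove (cmSet q (ι f)) ∧ cmNorm q (ι f) = ‖f‖) ∧
      -- `ι : K → H` is a bijection onto `H`:
      Set.BijOn ι K {x : X | BddAbove (cmSet q x)} ∧
      -- `‖·‖_H` is Hilbertian (parallelogram law on `H`):
      (∀ x y : X, BddAbove (cmSet q x) → BddAbove (cmSet q y) →
        cmNorm q (x + y) ^ 2 + cmNorm q (x - y) ^ 2 =
          2 * cmNorm q x ^ 2 + 2 * cmNorm q y ^ 2) ∧
      -- `(H, ‖·‖_H)` is separable:
      (∃ D : Set X, D.Countable ∧ (∀ x ∈ D, BddAbove (cmSet q x)) ∧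
        ∀ x : X, BddAbove (cmSet q x) → ∀ ε : ℝ, 0 < ε →
          ∃ y ∈ D, cmNorm q (x - y) < ε) ∧
      -- `(H, ‖·‖_H)` is complete:
      (∀ s : ℕ → X, (∀ n, BddAbove (cmSet q (s n))) →
        (∀ ε : ℝ, 0 < ε → ∃ N : ℕ, ∀ m ≥ N, ∀ n ≥ N, cmNorm q (s m - s n) < ε) →
        ∃ x : X, BddAbove (cmSet q x) ∧
          Filter.Tendsto (fun n => cmNorm q (s n - x)) Filter.atTop (nhds 0)) := by
  intro K hK ι hι
  have := UniformSpace.secondCountable_of_separable X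
  -- makes `Lp ℝ 2 μ` second countable, so that its closed subspaces are separable
  have : Fact ((2 : ℝ≥0∞) ≠ ∞) := ⟨ENNReal.ofNat_ne_top⟩
  have hX : MemLp (id : X → X) 2 μ :=
    (memLp_two_iff_integrable_sq_norm aestronglyMeasurable_id).mpr hC2
  set T : StrongDual ℝ X →ₗ[ℝ] Lp ℝ 2 μ := (StrongDual.toLp μ 2).toLinearMap
  set Ks := (LinearMap.range T).topologicalClosure
  have hKs : K = Ks := by
    have hT : (fun u => (hu2 u).toLp (fun x => u x)) = T :=
      funext fun u => (StrongDual.toLp_apply hX u).symm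
    rw [hK, hT, Submodule.topologicalClosure_coe, LinearMap.coe_range]
  have hιJ : ι = Lp.integralSmulIdₗ hX := hι
  subst hKs hιJ
  have hT : ∀ u, ‖T u‖ = √(q u u) := fun u =>
    StrongDual.norm_toLp_eq_sqrt_of_charFun hX (apply_self_nonneg_of_pos hq_smul hq_pos u)
      fun t => by simpa [apply_smul_smul_eq_sq_mul hq_symm hq_smul] using hchar (t • u)
  have hJ := StrongDual.apply_integralSmulIdₗ (μ := μ) hX
  have hN : ∀ f ∈ Ks, cmNorm q (Lp.integralSmulIdₗ hX f) = ‖f‖ :=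
    fun f hf => cmNorm_eq_norm_of_mem_topologicalClosure hT hJ hf
  have hH : ∀ x, BddAbove (cmSet q x) ↔ x ∈ Ks.map (Lp.integralSmulIdₗ hX) := fun x =>
    ⟨exists_eq_of_bddAbove_cmSet hT hq_pos hJ, by
      rintro ⟨f, -, rfl⟩; exact ⟨‖f‖, fun r hr => le_norm_of_mem_cmSet hT hJ hr⟩⟩
  simp only [hH]
  refine ⟨fun f hf => ⟨Lp.integrable_smul_id hX f, ⟨f, hf, rfl⟩, hN f hf⟩, ?_,
    fun x y => parallelogram_of_norm_eq hN, exists_countable_dense_of_norm_eq hN,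
    fun s => exists_tendsto_of_norm_eq hN⟩
  rw [SetLike.setOfPred_mem_eq, Submodule.map_coe]
  exact (injOn_of_norm_eq hN).bijOn_image

/-- Let `K` be the closure of `X*` in `L²(X,μ;ℝ)`.  For every `f ∈ K` the Bochner integral
`ιf = ∫ x f(x) dμ(x)` exists in `X`, `ιf ∈ H` with `‖ιf‖_H = ‖f‖_{L²(μ)}`, and
`ι : K → H` is a bijection onto `H`.  Consequently `‖·‖_H` satisfies the parallelogram law
(it is a Hilbertian norm) and `(H,‖·‖_H)` is a separable (countably dense) complete space. -/
theorem cameronMartin_isometry_of_L2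
    {X : Type*} [NormedAddCommGroup X] [NormedSpace ℝ X] [CompleteSpace X]
    [TopologicalSpace.SeparableSpace X] [MeasurableSpace X] [BorelSpace X]
    (μ : Measure X) [IsProbabilityMeasure μ]
    (q : (X →L[ℝ] ℝ) → (X →L[ℝ] ℝ) → ℝ)
    (hq_symm : ∀ u v : X →L[ℝ] ℝ, q u v = q v u)
    (hq_add : ∀ u v w : X →L[ℝ] ℝ, q (u + v) w = q u w + q v w)
    (hq_smul : ∀ (r : ℝ) (u v : X →L[ℝ] ℝ), q (r • u) v = r * q u v)
    (hq_pos : ∀ u : X →L[ℝ] ℝ, u ≠ 0 → 0 < q u u)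
    (hchar : ∀ u : X →L[ℝ] ℝ,
      (∫ x, Complex.exp (Complex.I * (u x : ℂ)) ∂μ) = Complex.exp (-(q u u : ℂ) / 2))
    (hC2 : Integrable (fun x => ‖x‖ ^ 2) μ)
    (hu2 : ∀ u : X →L[ℝ] ℝ, MemLp (fun x => u x) 2 μ) :
    -- `K` is the closure of `X*` in `L²(μ)` and `ι f = ∫ x f(x) dμ(x)`:
    ∀ K : Set (Lp ℝ 2 μ),
      K = closure (Set.range fun u : X →L[ℝ] ℝ => (hu2 u).toLp (fun x => u x)) →
      ∀ ι : Lp ℝ 2 μ → X, (ι = fun f => ∫ x, f x • x ∂μ) →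
      -- the Bochner integral defining `ι f` exists and `ι f ∈ H` isometrically:
      (∀ f ∈ K, Integrable (fun x => f x • x) μ ∧
        BddAbove (cmSet q (ι f)) ∧ cmNorm q (ι f) = ‖f‖) ∧
      -- `ι : K → H` is a bijection onto `H`:
      Set.BijOn ι K {x : X | BddAbove (cmSet q x)} ∧
      -- `‖·‖_H` is Hilbertian (parallelogram law on `H`):
      (∀ x y : X, BddAbove (cmSet q x) → BddAbove (cmSet q y) →
        cmNorm q (x + y) ^ 2 + cmNorm q (x - y) ^ 2 =
          2 * cmNorm q x ^ 2 + 2 * cmNorm q y ^ 2) ∧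
      -- `(H, ‖·‖_H)` is separable:
      (∃ D : Set X, D.Countable ∧ (∀ x ∈ D, BddAbove (cmSet q x)) ∧
        ∀ x : X, BddAbove (cmSet q x) → ∀ ε : ℝ, 0 < ε →
          ∃ y ∈ D, cmNorm q (x - y) < ε) ∧
      -- `(H, ‖·‖_H)` is complete:
      (∀ s : ℕ → X, (∀ n, BddAbove (cmSet q (s n))) →
        (∀ ε : ℝ, 0 < ε → ∃ N : ℕ, ∀ m ≥ N, ∀ n ≥ N, cmNorm q (s m - s n) < ε) →
        ∃ x : X, BddAbove (cmSet q x) ∧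
          Filter.Tendsto (fun n => cmNorm q (s n - x)) Filter.atTop (nhds 0)) :=
  cameronMartin_isometry_of_L2_general μ q hq_symm hq_smul hq_pos hchar hC2 hu2
end

section
/- For every finite-dimensional real inner product space 𝐂 and every continuous linear map φ : X → 𝐂: Σ_{j=1}^∞ ‖φ(e_j)‖²_𝐂 = ∫_X ‖φ(x)‖²_𝐂 dμ(x) < ∞; in particular Σ_{j=1}^∞ ‖φ(e_j)‖²_𝐂 ≤ (∫_X ‖x‖_X² dμ(x)) · ‖φ‖²_{op}, where ‖φ‖_{op} is the operator norm of φ : X → 𝐂. -/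
/-!
Fix an orthonormal basis `b` of the finite-dimensional space `C`. Then
`‖φ x‖² = ∑ₖ ⟪b k, φ x⟫²` is a finite sum of squares of the functionals `uₖ = ⟪b k, φ ·⟫ ∈ X*`,
and for each of them the hypothesis gives `∫ uₖ² dμ = ∑ⱼ uₖ(eⱼ)²`, the series converging by
Bessel's inequality for `uₖ ∘ i` on `H`. Summing over `k` yields the identity; the bound is
`‖φ x‖ ≤ ‖φ‖ ‖x‖` integrated.
-/

open MeasureTheory

/-- Bessel's inequality for a functional; `H` need not be complete, so Riesz is not available. -/
theorem Orthonormal.sum_sq_apply_le_opNorm_sq {ι H : Type*} [NormedAddCommGroup H]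
    [InnerProductSpace ℝ H] {e : ι → H} (he : Orthonormal ℝ e) (f : H →L[ℝ] ℝ) (s : Finset ι) :
    ∑ j ∈ s, f (e j) ^ 2 ≤ ‖f‖ ^ 2 := by
  set v := ∑ j ∈ s, f (e j) • e j
  have hv : ‖v‖ ^ 2 = ∑ j ∈ s, f (e j) ^ 2 := by
    rw [← real_inner_self_eq_norm_sq, he.inner_sum]
    simp [sq]
  have hfv : f v = ∑ j ∈ s, f (e j) ^ 2 := by
    simp [v, map_sum, sq]
  have hle : f v ≤ ‖f‖ * ‖v‖ := (le_abs_self _).trans (f.le_opNorm v)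
  nlinarith [norm_nonneg v, norm_nonneg f, sq_nonneg (‖f‖ - ‖v‖)]

theorem Orthonormal.summable_sq_apply {ι H : Type*} [NormedAddCommGroup H]
    [InnerProductSpace ℝ H] {e : ι → H} (he : Orthonormal ℝ e) (f : H →L[ℝ] ℝ) :
    Summable fun j => f (e j) ^ 2 :=
  summable_of_sum_le (fun _ => sq_nonneg _) (he.sum_sq_apply_le_opNorm_sq f)

theorem ContinuousLinearMap.sq_norm_apply_le {X W : Type*} [NormedAddCommGroup X]
    [NormedSpace ℝ X] [NormedAddCommGroup W] [NormedSpace ℝ W] (ψ : X →L[ℝ] W) (x : X) :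
    ‖ψ x‖ ^ 2 ≤ ‖ψ‖ ^ 2 * ‖x‖ ^ 2 := by
  rw [← mul_pow]
  exact pow_le_pow_left₀ (norm_nonneg _) (ψ.le_opNorm x) 2

section SecondMoment

variable {X W : Type*} [NormedAddCommGroup X] [NormedSpace ℝ X] [MeasurableSpace X]
  [BorelSpace X] [NormedAddCommGroup W] [NormedSpace ℝ W] {μ : Measure X}

theorem ContinuousLinearMap.integrable_sq_norm_comp (hX : Integrable (fun x => ‖x‖ ^ 2) μ)
    (ψ : X →L[ℝ] W) :
    Integrable (fun x => ‖ψ x‖ ^ 2) μ := by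
  refine (hX.const_mul (‖ψ‖ ^ 2)).mono' ?_ (Filter.Eventually.of_forall fun x => ?_)
  · exact ((continuous_norm.comp ψ.continuous).pow 2).aestronglyMeasurable
  · rw [Real.norm_of_nonneg (by positivity)]
    exact ψ.sq_norm_apply_le x

theorem ContinuousLinearMap.integral_sq_norm_comp_le (hX : Integrable (fun x => ‖x‖ ^ 2) μ)
    (ψ : X →L[ℝ] W) :
    ∫ x, ‖ψ x‖ ^ 2 ∂μ ≤ (∫ x, ‖x‖ ^ 2 ∂μ) * ‖ψ‖ ^ 2 := by
  rw [mul_comm, ← integral_const_mul]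
  exact integral_mono (ψ.integrable_sq_norm_comp hX) (hX.const_mul _) ψ.sq_norm_apply_le

theorem hasSum_sq_norm_comp_of_hasSum_sq {ι C : Type*} [NormedAddCommGroup C]
    [InnerProductSpace ℝ C] [FiniteDimensional ℝ C] (hX : Integrable (fun x => ‖x‖ ^ 2) μ)
    {v : ι → X} (hv : ∀ u : X →L[ℝ] ℝ, HasSum (fun j => u (v j) ^ 2) (∫ x, u x ^ 2 ∂μ))
    (φ : X →L[ℝ] C) :
    HasSum (fun j => ‖φ (v j)‖ ^ 2) (∫ x, ‖φ x‖ ^ 2 ∂μ) := by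
  let b := stdOrthonormalBasis ℝ C
  let u : Fin (Module.finrank ℝ C) → X →L[ℝ] ℝ := fun k => (innerSL ℝ (b k)).comp φ
  have hnorm : ∀ x, ‖φ x‖ ^ 2 = ∑ k, u k x ^ 2 := fun x => (b.sum_sq_inner_right (φ x)).symm
  have hint : ∀ k, Integrable (fun x => u k x ^ 2) μ := fun k => by
    simpa only [Real.norm_eq_abs, sq_abs] using (u k).integrable_sq_norm_comp hX
  simp only [hnorm]
  rw [integral_finsetSum _ fun k _ => hint k]
  exact hasSum_sum fun k _ => hv (u k)

end SecondMoment

theorem hilbertSchmidt_eq_integral_general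
    {X H C : Type*} [NormedAddCommGroup X] [NormedSpace ℝ X]
    [MeasurableSpace X] [BorelSpace X]
    [NormedAddCommGroup H] [InnerProductSpace ℝ H]
    [NormedAddCommGroup C] [InnerProductSpace ℝ C] [FiniteDimensional ℝ C]
    (μ : Measure X)
    (hC2 : Integrable (fun x => ‖x‖ ^ 2) μ)
    (i : H →L[ℝ] X)
    (e : ℕ → H) (he : Orthonormal ℝ e)
    (hq : ∀ u : X →L[ℝ] ℝ, (∫ x, (u x) ^ 2 ∂μ) = ∑' j : ℕ, (u (i (e j))) ^ 2)
    (φ : X →L[ℝ] C) :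
    Summable (fun j : ℕ => ‖φ (i (e j))‖ ^ 2) ∧
    (∑' j : ℕ, ‖φ (i (e j))‖ ^ 2) = ∫ x, ‖φ x‖ ^ 2 ∂μ ∧
    (∑' j : ℕ, ‖φ (i (e j))‖ ^ 2) ≤ (∫ x, ‖x‖ ^ 2 ∂μ) * ‖φ‖ ^ 2 := by
  have hv : ∀ u : X →L[ℝ] ℝ, HasSum (fun j => u (i (e j)) ^ 2) (∫ x, u x ^ 2 ∂μ) := fun u => by
    rw [hq u]
    exact (he.summable_sq_apply (u.comp i)).hasSum
  have hφ := hasSum_sq_norm_comp_of_hasSum_sq hC2 hv φ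
  exact ⟨hφ.summable, hφ.tsum_eq, hφ.tsum_eq ▸ φ.integral_sq_norm_comp_le hC2⟩

/-- If `H` embeds continuously in `X` via `i`, `{e_j}` is orthonormal in `H`, and
`∫ u(x)² dμ(x) = Σ_j u(e_j)²` for all `u ∈ X*`, then for every finite-dimensional real inner
product space `𝐂` and every continuous linear `φ : X → 𝐂`:
`Σ_j ‖φ(e_j)‖² = ∫ ‖φ(x)‖² dμ(x) < ∞`, and `Σ_j ‖φ(e_j)‖² ≤ (∫ ‖x‖² dμ(x)) ‖φ‖²`. -/
theorem hilbertSchmidt_eq_integral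
    {X H C : Type*} [NormedAddCommGroup X] [NormedSpace ℝ X]
    [TopologicalSpace.SeparableSpace X] [MeasurableSpace X] [BorelSpace X]
    [NormedAddCommGroup H] [InnerProductSpace ℝ H] [TopologicalSpace.SeparableSpace H]
    [NormedAddCommGroup C] [InnerProductSpace ℝ C] [FiniteDimensional ℝ C]
    (μ : Measure X) [IsProbabilityMeasure μ]
    (hC2 : Integrable (fun x => ‖x‖ ^ 2) μ)
    (i : H →L[ℝ] X) (hi : Function.Injective i)
    (e : ℕ → H) (he : Orthonormal ℝ e)
    (hq : ∀ u : X →L[ℝ] ℝ, (∫ x, (u x) ^ 2 ∂μ) = ∑' j : ℕ, (u (i (e j))) ^ 2)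
    (φ : X →L[ℝ] C) :
    Summable (fun j : ℕ => ‖φ (i (e j))‖ ^ 2) ∧
    (∑' j : ℕ, ‖φ (i (e j))‖ ^ 2) = ∫ x, ‖φ x‖ ^ 2 ∂μ ∧
    (∑' j : ℕ, ‖φ (i (e j))‖ ^ 2) ≤ (∫ x, ‖x‖ ^ 2 ∂μ) * ‖φ‖ ^ 2 :=
  hilbertSchmidt_eq_integral_general μ hC2 i e he hq φ
end
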